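/- arXiv:2511.07611 — 2 statements merged into one kernel-verified Lean document; each statement's English description precedes it below -/
import Mathlib

section
/- Let P be a finitary unique-cover-modular poset, let w : P → ℤ take only positive values, and let r be an integer such that (w, r) satisfies the ideal-differential condition on P. Then for every p ∈ P, the set Sₚ is an antichain: any two distinct elements of Sₚ are incomparable. -/
open scoped BigOperators

/-- A poset is finitary if every principal lower set is finite. -/
def Finitary (P : Type*) [PartialOrder P] : Prop :=
  ∀ x : P, {y : P | y ≤ x}.Finite

/-- A poset is unique-cover-modular if any two distinct elements covering a common
element, or covered by a common element, are covered by a unique common element and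
cover a unique common element. -/
def UCM (P : Type*) [PartialOrder P] : Prop :=
  ∀ x y : P, x ≠ y →
    ((∃ a, a ⋖ x ∧ a ⋖ y) ∨ (∃ b, x ⋖ b ∧ y ⋖ b)) →
    (∃! a, a ⋖ x ∧ a ⋖ y) ∧ (∃! b, x ⋖ b ∧ y ⋖ b)

/-- The set of maximal elements of a subset `I` of a poset. -/
def maxIn {P : Type*} [PartialOrder P] (I : Set P) : Set P :=
  {a | a ∈ I ∧ ∀ b ∈ I, a ≤ b → b = a}

/-- The set of minimal elements of a subset `I` of a poset. -/
def minIn {P : Type*} [PartialOrder P] (I : Set P) : Set P :=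
  {a | a ∈ I ∧ ∀ b ∈ I, b ≤ a → b = a}

/-- `(w, r)` satisfies the ideal-differential condition on `P`: for every finite lower set
`I`, the set of minimal elements of the complement is finite and
`(∑_{a maximal in I} w a) + r = ∑_{b minimal in P ∖ I} w b`. -/
def IdealDiff {P : Type*} [PartialOrder P] (w : P → ℤ) (r : ℤ) : Prop :=
  ∀ I : Set P, I.Finite → IsLowerSet I →
    (minIn Iᶜ).Finite ∧ ((∑ᶠ a ∈ maxIn I, w a) + r = ∑ᶠ b ∈ minIn Iᶜ, w b)

/-- `Sset p` is the set of siblings of `p`: elements `x ≠ p` with `a < x < b` for some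
`a ⋖ p` and `p ⋖ b`. -/
def Sset {P : Type*} [PartialOrder P] (p : P) : Set P :=
  {x | x ≠ p ∧ ∃ a b : P, a ⋖ p ∧ p ⋖ b ∧ a < x ∧ x < b}

/-!
Finiteness of principal ideals makes the height `Order.height` finite, and unique-cover-modularity
forces every cover to raise it by exactly one: two coatoms of `b` cover a common element, so by
induction on `b` all coatoms of `b` have the same height, and one of them realises `height b - 1`.
An element of `Sset p` lies strictly between elements of heights `height p ∓ 1`, hence has height
`height p`, and distinct comparable elements of finite height have different heights.
-/

open Order

namespace Finitary

variable {P : Type*} [PartialOrder P]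

theorem height_lt_top (hfin : Finitary P) (x : P) : height x < ⊤ := by
  refine (height_le fun p hp => ?_).trans_lt (ENat.natCast_lt_top (hfin x).toFinset.card)
  have hcard := Finset.card_le_card_of_injOn (s := Finset.univ) (t := (hfin x).toFinset) p
    (fun i _ => by simpa [← hp, RelSeries.last] using p.monotone (Fin.le_last i))
    p.strictMono.injective.injOn
  rw [Finset.card_univ, Fintype.card_fin] at hcard
  exact_mod_cast (Nat.le_succ _).trans hcard

theorem wellFoundedLT (hfin : Finitary P) : WellFoundedLT P :=
  ⟨Subrelation.wf (fun h => height_strictMono h (hfin.height_lt_top _))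
    (InvImage.wf height wellFounded_lt)⟩

theorem isStronglyCoatomic (hfin : Finitary P) : IsStronglyCoatomic P :=
  letI := LocallyFiniteOrder.ofFiniteIcc fun _ b => (hfin b).subset fun _ h => h.2
  inferInstance

theorem height_eq_add_one_of_covBy (hfin : Finitary P) (hucm : UCM P) {a b : P} (hab : a ⋖ b) :
    height b = height a + 1 := by
  have := hfin.wellFoundedLT
  have := hfin.isStronglyCoatomic
  induction b using WellFoundedLT.induction generalizing a with
  | _ b ih =>
  have coatom_height_eq : ∀ a', a' ⋖ b → height a' = height a := by
    intro a' ha'b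
    by_cases h : a' = a
    · rw [h]
    obtain ⟨⟨c, ⟨hca', hca⟩, -⟩, -⟩ := hucm a' a h (Or.inr ⟨b, ha'b, hab⟩)
    rw [ih a' ha'b.lt hca', ih a hab.lt hca]
  obtain ⟨N, hN⟩ := ENat.ne_top_iff_exists.mp (hfin.height_lt_top b).ne
  obtain _ | n := N
  · exact absurd hN.symm (height_ne_zero.mpr hab.lt.not_isMin)
  obtain ⟨-, ⟨y, hyb, hy⟩, hle⟩ := height_eq_coe_add_one_iff.mp (by exact_mod_cast hN.symm)
  obtain ⟨a', hya', ha'b⟩ := exists_le_covBy_of_lt hyb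
  rw [← hN, ← coatom_height_eq a' ha'b, le_antisymm (hle a' ha'b.lt) (hy ▸ height_mono hya')]
  norm_cast

theorem height_eq_of_mem_Sset (hfin : Finitary P) (hucm : UCM P) {p x : P} (hx : x ∈ Sset p) :
    height x = height p := by
  obtain ⟨-, a, b, hap, hpb, hax, hxb⟩ := hx
  have hlow := height_add_one_le hax
  have hhigh := height_add_one_le hxb
  rw [hfin.height_eq_add_one_of_covBy hucm hpb, hfin.height_eq_add_one_of_covBy hucm hap] at hhigh
  rw [hfin.height_eq_add_one_of_covBy hucm hap]
  obtain ⟨k, hk⟩ := ENat.ne_top_iff_exists.mp (hfin.height_lt_top a).ne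
  obtain ⟨m, hm⟩ := ENat.ne_top_iff_exists.mp (hfin.height_lt_top x).ne
  rw [← hk, ← hm] at hlow hhigh ⊢
  norm_cast at hlow hhigh ⊢
  omega

end Finitary

theorem stmt12_general {P : Type*} [PartialOrder P]
    (hfin : Finitary P) (hucm : UCM P) :
    ∀ p : P, ∀ x ∈ Sset p, ∀ y ∈ Sset p, x ≠ y → ¬(x ≤ y ∨ y ≤ x) := by
  intro p x hx y hy hxy hle
  have hheight : height x = height y :=
    (hfin.height_eq_of_mem_Sset hucm hx).trans (hfin.height_eq_of_mem_Sset hucm hy).symm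
  rcases hle with h | h
  · exact (height_strictMono (h.lt_of_ne hxy) (hfin.height_lt_top x)).ne hheight
  · exact (height_strictMono (h.lt_of_ne hxy.symm) (hfin.height_lt_top y)).ne hheight.symm

/-- The set of siblings of any point is an antichain. -/
theorem stmt12 {P : Type*} [PartialOrder P]
    (hfin : Finitary P) (hucm : UCM P)
    (w : P → ℤ) (hw : ∀ x : P, 0 < w x)
    (r : ℤ) (hdiff : IdealDiff w r) :
    ∀ p : P, ∀ x ∈ Sset p, ∀ y ∈ Sset p, x ≠ y → ¬(x ≤ y ∨ y ≤ x) :=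
  stmt12_general hfin hucm
end

section
/- Let P be a unique-cover-modular poset and let a, b ∈ P be joined by a finite sequence a = y₀, y₁, …, y_m = b in which, for each j < m, either y_j ⋖ y_{j+1} or y_{j+1} ⋖ y_j. Then there exist n ≥ 0, an index 0 ≤ i ≤ n, and a sequence a = x₀, x₁, …, xₙ = b such that x_{j+1} ⋖ x_j for all j < i and x_j ⋖ x_{j+1} for all i ≤ j < n (the sequence first descends by covering steps, then ascends by covering steps). -/
open Relation

theorem Relation.ReflTransGen.exists_seq {α : Type*} {r : α → α → Prop} {a b : α}
    (h : ReflTransGen r a b) :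
    ∃ (n : ℕ) (x : ℕ → α), x 0 = a ∧ x n = b ∧ ∀ j < n, r (x j) (x (j + 1)) := by
  induction h using ReflTransGen.head_induction_on with
  | refl => exact ⟨0, fun _ => b, rfl, rfl, fun _ h => absurd h (Nat.not_lt_zero _)⟩
  | head hac _ ih =>
    obtain ⟨n, x, hx0, hxn, hx⟩ := ih
    refine ⟨n + 1, fun | 0 => _ | j + 1 => x j, rfl, hxn, ?_⟩
    rintro (_ | j) hj
    · simpa [hx0] using hac
    · exact hx j (by omega)

section ValleyJoined

variable {P : Type*} [PartialOrder P]

def ValleyJoined (a t : P) : Prop :=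
  ∃ v, ReflTransGen (· ⋖ ·) v a ∧ ReflTransGen (· ⋖ ·) v t

theorem ValleyJoined.refl (a : P) : ValleyJoined a a :=
  ⟨a, .refl, .refl⟩

theorem ValleyJoined.of_covBy {a t c : P} (h : ValleyJoined a t) (htc : t ⋖ c) :
    ValleyJoined a c :=
  let ⟨v, hva, hvt⟩ := h
  ⟨v, hva, hvt.tail htc⟩

theorem UCM.exists_reflTransGen_covBy_of_covBy (hucm : UCM P) {v t c : P}
    (hvt : ReflTransGen (· ⋖ ·) v t) (hct : c ⋖ t) :
    ∃ w, ReflTransGen (· ⋖ ·) w v ∧ ReflTransGen (· ⋖ ·) w c := by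
  induction hvt generalizing c with
  | refl => exact ⟨c, .single hct, .refl⟩
  | @tail s t hvs hst ih =>
    by_cases hcs : c = s
    · exact ⟨v, .refl, hcs ▸ hvs⟩
    obtain ⟨⟨d, ⟨hds, hdc⟩, -⟩, -⟩ := hucm s c (Ne.symm hcs) (.inr ⟨t, hst, hct⟩)
    obtain ⟨w, hwv, hwd⟩ := ih hds
    exact ⟨w, hwv, hwd.tail hdc⟩

theorem UCM.valleyJoined_of_covBy (hucm : UCM P) {a t c : P} (h : ValleyJoined a t)
    (hct : c ⋖ t) : ValleyJoined a c := by
  obtain ⟨v, hva, hvt⟩ := h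
  obtain ⟨w, hwv, hwc⟩ := hucm.exists_reflTransGen_covBy_of_covBy hvt hct
  exact ⟨w, hwv.trans hva, hwc⟩

theorem ValleyJoined.exists_seq {a t : P} (h : ValleyJoined a t) :
    ∃ (n i : ℕ) (x : ℕ → P), i ≤ n ∧ x 0 = a ∧ x n = t ∧
      (∀ j < i, x (j + 1) ⋖ x j) ∧ (∀ j, i ≤ j → j < n → x j ⋖ x (j + 1)) := by
  obtain ⟨v, hva, hvt⟩ := h
  obtain ⟨k, d, hd0, hdk, hd⟩ := (reflTransGen_swap.mpr hva).exists_seq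
  obtain ⟨l, u, hu0, hul, hu⟩ := hvt.exists_seq
  let x : ℕ → P := fun j => if j ≤ k then d j else u (j - k)
  have hx_up : ∀ j, k ≤ j → x j = u (j - k) := by
    intro j hj
    rcases hj.eq_or_lt with rfl | hj
    · simp [x, hdk, hu0]
    · simp [x, hj.not_ge]
  refine ⟨k + l, k, x, by omega, by simp [x, hd0], by simp [hx_up, hul], ?_, ?_⟩
  · intro j hj
    simpa [x, hj.le, Nat.succ_le_of_lt hj] using hd j hj
  · intro j hkj hjn
    rw [hx_up j hkj, hx_up (j + 1) (by omega), Nat.sub_add_comm hkj]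
    exact hu (j - k) (by omega)

end ValleyJoined

/-- Any two elements joined by a zig-zag path of coverings are joined by a path that first
descends by covering steps and then ascends by covering steps. -/
theorem stmt15 {P : Type*} [PartialOrder P] (hucm : UCM P)
    (a b : P) (m : ℕ) (y : ℕ → P) (hy0 : y 0 = a) (hym : y m = b)
    (hy : ∀ j < m, y j ⋖ y (j + 1) ∨ y (j + 1) ⋖ y j) :
    ∃ (n i : ℕ) (x : ℕ → P), i ≤ n ∧ x 0 = a ∧ x n = b ∧
      (∀ j < i, x (j + 1) ⋖ x j) ∧
      (∀ j, i ≤ j → j < n → x j ⋖ x (j + 1)) := by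
  have hjoined : ∀ k ≤ m, ValleyJoined a (y k) := by
    intro k hk
    induction k with
    | zero => exact hy0 ▸ ValleyJoined.refl a
    | succ k ih =>
      rcases hy k (by omega) with hup | hdown
      · exact (ih (by omega)).of_covBy hup
      · exact hucm.valleyJoined_of_covBy (ih (by omega)) hdown
  exact hym ▸ (hjoined m le_rfl).exists_seq
end
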